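/- Let Y ∈ ℝ^{n₁×n₂} have rank r, let I, J be index sets of size r with Y(I,J) invertible, and suppose Y(:,J) = Q R is a QR decomposition with Q ∈ ℝ^{n₁×r} having orthonormal columns and R invertible. Then Q(I,:) is invertible and Y = Q · Q(I,:)^{-1} · Y(I,:). -/

import Mathlib

open Matrix

/-! The column space of `Y` contains that of `Y(:,J)`, and the two have the same dimension
because `Y(I,J)`, an invertible `r × r` submatrix of `Y(:,J)`, forces `rank Y(:,J) ≥ r = rank Y`.
Hence every column of `Y` lies in the column space of `Q`, i.e. `Y = Q M` for some `M`.
Restricting to the rows `I` gives `Y(I,:) = Q(I,:) M`, where `Q(I,:)` is invertible since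
`Y(I,J) = Q(I,:) R`; so `M = Q(I,:)⁻¹ Y(I,:)`. -/

namespace Matrix

theorem submatrix_id_mul {α l m n o : Type*} [Fintype n] [Mul α] [AddCommMonoid α]
    (A : Matrix m n α) (B : Matrix n o α) (g : l → m) :
    (A * B).submatrix g id = A.submatrix g id * B := by
  rw [submatrix_mul A B g id id Function.bijective_id, submatrix_id_id]

theorem range_mulVecLin_submatrix_id_le {R m n o : Type*} [CommSemiring R] [Fintype n]
    [DecidableEq n] [Fintype o] (A : Matrix m n R) (c : o → n) :
    LinearMap.range (A.submatrix id c).mulVecLin ≤ LinearMap.range A.mulVecLin := by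
  have hA : A.submatrix id c = A * (1 : Matrix n n R).submatrix id c := by
    simpa using (mul_submatrix_one (Equiv.refl n) c A).symm
  rw [hA, mulVecLin_mul]
  exact LinearMap.range_comp_le_range _ _

theorem exists_mul_eq_of_range_mulVecLin_le {R m n o : Type*} [CommSemiring R] [Fintype n]
    [Fintype o] {A : Matrix m n R} {B : Matrix m o R}
    (hBA : LinearMap.range B.mulVecLin ≤ LinearMap.range A.mulVecLin) :
    ∃ M : Matrix n o R, A * M = B := by
  classical
  have hcol (j : o) : ∃ v, A *ᵥ v = B.col j := by
    simpa using hBA ⟨Pi.single j 1, by simp⟩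
  choose v hv using hcol
  refine ⟨of fun i j => v j i, ?_⟩
  ext i j
  simpa [mulVec, dotProduct, mul_apply] using congrFun (hv j) i

theorem range_mulVecLin_submatrix_id_eq_of_rank_le {K m n o : Type*} [Field K] [Fintype m]
    [Fintype n] [Fintype o] (A : Matrix m n K) (c : o → n)
    (hc : A.rank ≤ (A.submatrix id c).rank) :
    LinearMap.range (A.submatrix id c).mulVecLin = LinearMap.range A.mulVecLin := by
  classical
  exact Submodule.eq_of_le_of_finrank_le (range_mulVecLin_submatrix_id_le A c) hc

theorem eq_mul_inv_submatrix_mul_submatrix {α m n o : Type*} [CommRing α] [Fintype n]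
    [DecidableEq n] {Y : Matrix m o α} {Q : Matrix m n α} {M : Matrix n o α} (hY : Y = Q * M)
    {g : n → m} (hQg : IsUnit (Q.submatrix g id)) :
    Y = Q * (Q.submatrix g id)⁻¹ * Y.submatrix g id := by
  rw [hY, submatrix_id_mul, Matrix.mul_assoc, ← Matrix.mul_assoc _ (Q.submatrix g id),
    nonsing_inv_mul _ ((isUnit_iff_isUnit_det _).mp hQg), Matrix.one_mul]

end Matrix

theorem cur_qr_stabilized_general
    {n₁ n₂ r : ℕ} (Y : Matrix (Fin n₁) (Fin n₂) ℝ)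
    (hrank : Y.rank = r)
    (g : Fin r → Fin n₁)
    (h : Fin r → Fin n₂)
    (hInv : IsUnit (Y.submatrix g h))
    (Q : Matrix (Fin n₁) (Fin r) ℝ) (R : Matrix (Fin r) (Fin r) ℝ)
    (hQR : Y.submatrix id h = Q * R) :
    IsUnit (Q.submatrix g id) ∧
    Y = Q * (Q.submatrix g id)⁻¹ * Y.submatrix g id := by
  have hYIJ : Y.submatrix g h = Q.submatrix g id * R := by
    rw [← submatrix_id_mul, ← hQR, submatrix_submatrix]; rfl
  have hQI : IsUnit (Q.submatrix g id) := isUnit_of_mul_isUnit_left (hYIJ ▸ hInv)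
  have hrankJ : Y.rank ≤ (Y.submatrix id h).rank :=
    calc Y.rank = (Y.submatrix g h).rank := by rw [hrank, rank_of_isUnit _ hInv, Fintype.card_fin]
      _ = ((Y.submatrix id h).submatrix g id).rank := rfl
      _ ≤ (Y.submatrix id h).rank := rank_submatrix_le _ _ _
  have hYQ : LinearMap.range Y.mulVecLin ≤ LinearMap.range Q.mulVecLin := by
    rw [← range_mulVecLin_submatrix_id_eq_of_rank_le Y h hrankJ, hQR, mulVecLin_mul]
    exact LinearMap.range_comp_le_range _ _
  obtain ⟨M, hM⟩ := exists_mul_eq_of_range_mulVecLin_le hYQ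
  exact ⟨hQI, eq_mul_inv_submatrix_mul_submatrix hM.symm hQI⟩

/-- Let `Y` have rank `r`, let `I`, `J` (encoded by injective maps `g`, `h`) be
index sets of size `r` with `Y(I,J)` invertible, and suppose `Y(:,J) = Q R` is
a QR decomposition with `Q` having orthonormal columns and `R` invertible.
Then `Q(I,:)` is invertible and `Y = Q · Q(I,:)⁻¹ · Y(I,:)`. -/
theorem cur_qr_stabilized
    {n₁ n₂ r : ℕ} (Y : Matrix (Fin n₁) (Fin n₂) ℝ)
    (hrank : Y.rank = r)
    (g : Fin r → Fin n₁) (hg : Function.Injective g)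
    (h : Fin r → Fin n₂) (hh : Function.Injective h)
    (hInv : IsUnit (Y.submatrix g h))
    (Q : Matrix (Fin n₁) (Fin r) ℝ) (R : Matrix (Fin r) (Fin r) ℝ)
    (hQ : Qᵀ * Q = 1) (hR : IsUnit R)
    (hQR : Y.submatrix id h = Q * R) :
    IsUnit (Q.submatrix g id) ∧
    Y = Q * (Q.submatrix g id)⁻¹ * Y.submatrix g id :=
  cur_qr_stabilized_general Y hrank g h hInv Q R hQR
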